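/- arXiv:2406.01474 — 4 statements merged into one kernel-verified Lean document; each statement's English description precedes it below -/
import Mathlib

section
/- For every real number r with 0 ≤ r ≤ 1 and every real θ, the inequality ∑_{k=1}^∞ (-1)^{k+1} r^k cos(kθ)/(k+2) ≤ ∑_{k=1}^∞ (-1)^{k+1} r^k/(k+2) holds. -/
/-!
By Abel's theorem it suffices to show, for `|t| < 1`, that
`∑ (-1)ⁿ (1 - cos((n+1)θ)) tⁿ / (n+3) ≥ 0` (take `t = r x` with `x → 1⁻`).
Writing `1/(n+3) = ∫₀¹ y^(n+2) dy` turns this series into `∫₀¹ y² K(-t y) dy`, where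
`K(u) = ∑ uⁿ (1 - cos((n+1)θ)) = (1+u)(1 - cos θ) / ((1-u)(1 - 2u cos θ + u²))`
is read off from the geometric series of `u e^{iθ}` and is visibly nonnegative for `|u| < 1`.
-/

open Filter Topology MeasureTheory

theorem hasSum_pow_mul_cos_succ_mul (θ : ℝ) {u : ℝ} (hu : |u| < 1) :
    HasSum (fun n : ℕ => u ^ n * Real.cos ((n + 1) * θ))
      ((Real.cos θ - u) / (1 - 2 * u * Real.cos θ + u ^ 2)) := by
  set ζ : ℂ := Complex.exp (θ * Complex.I)
  have hζ : ‖(u : ℂ) * ζ‖ < 1 := by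
    simpa [ζ, Complex.norm_exp_ofReal_mul_I] using hu
  have hre : (ζ / (1 - u * ζ)).re = (Real.cos θ - u) / (1 - 2 * u * Real.cos θ + u ^ 2) := by
    simp only [Complex.div_re, Complex.normSq_apply, ← add_div, ζ, Complex.sub_re,
      Complex.sub_im, Complex.one_re, Complex.one_im, Complex.re_ofReal_mul,
      Complex.im_ofReal_mul, Complex.exp_ofReal_mul_I_re, Complex.exp_ofReal_mul_I_im]
    congr 1
    · linear_combination (-u) * Real.sin_sq_add_cos_sq θ
    · linear_combination u ^ 2 * Real.sin_sq_add_cos_sq θ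
  rw [← hre, div_eq_mul_inv, mul_comm]
  refine Complex.hasSum_re ((hasSum_geometric_of_norm_lt_one hζ).mul_right ζ) |>.congr_fun ?_
  intro n
  rw [mul_pow, mul_assoc, ← pow_succ, ← Complex.exp_nat_mul, ← Complex.ofReal_pow]
  rw [Complex.re_ofReal_mul, ← Complex.exp_ofReal_mul_I_re]
  push_cast
  ring_nf

theorem hasSum_mul_pow_div_eq_integral {c : ℕ → ℝ} {C x : ℝ} (hc : ∀ n, |c n| ≤ C)
    (hx : |x| < 1) (k : ℕ) :
    HasSum (fun n : ℕ => c n * x ^ n / (n + k + 1))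
      (∫ y in (0 : ℝ)..1, y ^ k * ∑' n : ℕ, c n * (x * y) ^ n) := by
  have hC : 0 ≤ C := (abs_nonneg _).trans (hc 0)
  have hunit : ∀ y ∈ Set.uIoc (0 : ℝ) 1, |y| ≤ 1 := fun y hy => by
    rw [Set.uIoc_of_le zero_le_one] at hy
    exact abs_le.mpr ⟨by linarith [hy.1], hy.2⟩
  have hbound : ∀ n, ∀ y ∈ Set.uIoc (0 : ℝ) 1, ‖c n * (x * y) ^ n‖ ≤ C * |x| ^ n := by
    intro n y hy
    rw [Real.norm_eq_abs, abs_mul, abs_pow, abs_mul, mul_pow]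
    exact mul_le_mul (hc n) (mul_le_of_le_one_right (by positivity)
      (pow_le_one₀ (abs_nonneg y) (hunit y hy))) (by positivity) hC
  have hweighted : ∀ n, ∀ y ∈ Set.uIoc (0 : ℝ) 1,
      ‖y ^ k * (c n * (x * y) ^ n)‖ ≤ C * |x| ^ n := by
    intro n y hy
    rw [norm_mul, norm_pow, Real.norm_eq_abs]
    exact (mul_le_of_le_one_left (norm_nonneg _) (pow_le_one₀ (abs_nonneg y) (hunit y hy))).trans
      (hbound n y hy)
  have hgeom : Summable fun n : ℕ => C * |x| ^ n :=
    (summable_geometric_of_lt_one (abs_nonneg x) hx).mul_left C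
  have hlim : ∀ y ∈ Set.uIoc (0 : ℝ) 1,
      HasSum (fun n => y ^ k * (c n * (x * y) ^ n)) (y ^ k * ∑' n : ℕ, c n * (x * y) ^ n) :=
    fun y hy => ((hgeom.of_norm_bounded fun n => hbound n y hy).hasSum).mul_left _
  have hterm : ∀ n : ℕ,
      ∫ y in (0 : ℝ)..1, y ^ k * (c n * (x * y) ^ n) = c n * x ^ n / (n + k + 1) := by
    intro n
    simp_rw [mul_pow, show ∀ y : ℝ, y ^ k * (c n * (x ^ n * y ^ n)) = c n * x ^ n * y ^ (n + k)
      from fun y => by ring]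
    rw [intervalIntegral.integral_const_mul, integral_pow]
    push_cast
    ring
  have := intervalIntegral.hasSum_integral_of_dominated_convergence (μ := volume) (a := 0) (b := 1)
    (F := fun n y => y ^ k * (c n * (x * y) ^ n)) (fun n _ => C * |x| ^ n)
    (fun n => by fun_prop) (fun n => ae_of_all _ (hweighted n)) (ae_of_all _ fun _ _ => hgeom)
    intervalIntegrable_const (ae_of_all _ hlim)
  exact this.congr_fun fun n => (hterm n).symm

theorem one_sub_two_mul_mul_cos_add_sq_pos (θ : ℝ) {u : ℝ} (hu : |u| < 1) :
    0 < 1 - 2 * u * Real.cos θ + u ^ 2 := by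
  have hc₁ := Real.neg_one_le_cos θ
  have hc₂ := Real.cos_le_one θ
  rcases abs_lt.mp hu with ⟨hu₁, hu₂⟩
  rcases le_total 0 u with hu₀ | hu₀
  · nlinarith [mul_nonneg hu₀ (sub_nonneg.mpr hc₂)]
  · nlinarith [mul_nonneg (neg_nonneg.mpr hu₀) (neg_le_iff_add_nonneg.mp hc₁)]

theorem hasSum_pow_mul_one_sub_cos_succ_mul (θ : ℝ) {u : ℝ} (hu : |u| < 1) :
    HasSum (fun n : ℕ => u ^ n * (1 - Real.cos ((n + 1) * θ)))
      ((1 + u) * (1 - Real.cos θ) / ((1 - u) * (1 - 2 * u * Real.cos θ + u ^ 2))) := by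
  have h₁ : 1 - u ≠ 0 := by linarith [(abs_lt.mp hu).2]
  have h₂ := (one_sub_two_mul_mul_cos_add_sq_pos θ hu).ne'
  rw [show (1 + u) * (1 - Real.cos θ) / ((1 - u) * (1 - 2 * u * Real.cos θ + u ^ 2))
      = (1 - u)⁻¹ - (Real.cos θ - u) / (1 - 2 * u * Real.cos θ + u ^ 2) by
    rw [inv_eq_one_div, div_sub_div _ _ h₁ h₂]
    congr 1
    ring]
  exact (hasSum_geometric_of_abs_lt_one hu).sub (hasSum_pow_mul_cos_succ_mul θ hu)
    |>.congr_fun fun n => mul_one_sub _ _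

theorem tsum_pow_mul_one_sub_cos_succ_mul_nonneg (θ : ℝ) {u : ℝ} (hu : |u| < 1) :
    0 ≤ ∑' n : ℕ, u ^ n * (1 - Real.cos ((n + 1) * θ)) := by
  rw [(hasSum_pow_mul_one_sub_cos_succ_mul θ hu).tsum_eq]
  rcases abs_lt.mp hu with ⟨hu₁, hu₂⟩
  have hcos := Real.cos_le_one θ
  have hD := one_sub_two_mul_mul_cos_add_sq_pos θ hu
  exact div_nonneg (by nlinarith) (by nlinarith)

theorem tsum_neg_one_pow_mul_one_sub_cos_div_nonneg (θ : ℝ) {t : ℝ} (ht : |t| < 1) :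
    0 ≤ ∑' n : ℕ, (-1) ^ n * (1 - Real.cos ((n + 1) * θ)) * t ^ n / (n + 3) := by
  have hc : ∀ n : ℕ, |(-1) ^ n * (1 - Real.cos ((n + 1) * θ))| ≤ 2 := fun n => by
    rw [abs_mul, abs_pow, abs_neg, abs_one, one_pow, one_mul, abs_le]
    constructor <;> linarith [Real.neg_one_le_cos ((n + 1) * θ), Real.cos_le_one ((n + 1) * θ)]
  have := hasSum_mul_pow_div_eq_integral hc ht 2
  push_cast at this
  simp only [show ∀ m : ℝ, m + 2 + 1 = m + 3 from fun m => by ring] at this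
  rw [this.tsum_eq]
  refine intervalIntegral.integral_nonneg zero_le_one fun y hy => ?_
  have hty : |-(t * y)| < 1 := by
    rw [abs_neg, abs_mul, abs_of_nonneg hy.1]
    exact (mul_le_of_le_one_right (abs_nonneg t) hy.2).trans_lt ht
  have hterm : ∀ n : ℕ, (-1) ^ n * (1 - Real.cos ((n + 1) * θ)) * (t * y) ^ n
      = (-(t * y)) ^ n * (1 - Real.cos ((n + 1) * θ)) := fun n => by rw [neg_pow]; ring
  rw [tsum_congr hterm]
  exact mul_nonneg (pow_nonneg hy.1 2) (tsum_pow_mul_one_sub_cos_succ_mul_nonneg θ hty)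

/-- For `0 ≤ r ≤ 1` and any real `θ`,
`∑_{k=1}^∞ (-1)^{k+1} r^k cos(kθ)/(k+2) ≤ ∑_{k=1}^∞ (-1)^{k+1} r^k/(k+2)`,
where both series are understood as limits of partial sums. -/
theorem cos_series_le (r θ : ℝ) (hr0 : 0 ≤ r) (hr1 : r ≤ 1) (A B : ℝ)
    (hA : Tendsto (fun N => ∑ k ∈ Finset.range N,
      (-1 : ℝ) ^ k * r ^ (k + 1) * Real.cos ((k + 1) * θ) / (k + 3)) atTop (𝓝 A))
    (hB : Tendsto (fun N => ∑ k ∈ Finset.range N,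
      (-1 : ℝ) ^ k * r ^ (k + 1) / (k + 3)) atTop (𝓝 B)) :
    A ≤ B := by
  have hD : Tendsto (fun N => ∑ k ∈ Finset.range N,
      ((-1 : ℝ) ^ k * r ^ (k + 1) / (k + 3)
        - (-1 : ℝ) ^ k * r ^ (k + 1) * Real.cos ((k + 1) * θ) / (k + 3))) atTop (𝓝 (B - A)) :=
    (hB.sub hA).congr fun N => (Finset.sum_sub_distrib _ _).symm
  have hAbel := Real.tendsto_tsum_powerSeries_nhdsWithin_lt hD
  have hpos : ∀ᶠ x in 𝓝[<] (1 : ℝ), 0 ≤ ∑' n : ℕ,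
      ((-1 : ℝ) ^ n * r ^ (n + 1) / (n + 3)
        - (-1 : ℝ) ^ n * r ^ (n + 1) * Real.cos ((n + 1) * θ) / (n + 3)) * x ^ n := by
    filter_upwards [Ioo_mem_nhdsLT zero_lt_one] with x hx
    have hrx : |r * x| < 1 := abs_lt.mpr
      ⟨by linarith [mul_nonneg hr0 hx.1.le], (mul_le_of_le_one_left hx.1.le hr1).trans_lt hx.2⟩
    have hterm : ∀ n : ℕ, ((-1 : ℝ) ^ n * r ^ (n + 1) / (n + 3)
        - (-1 : ℝ) ^ n * r ^ (n + 1) * Real.cos ((n + 1) * θ) / (n + 3)) * x ^ n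
        = r * ((-1) ^ n * (1 - Real.cos ((n + 1) * θ)) * (r * x) ^ n / (n + 3)) := fun n => by
      ring
    rw [tsum_congr hterm, tsum_mul_left]
    exact mul_nonneg hr0 (tsum_neg_one_pow_mul_one_sub_cos_div_nonneg θ hrx)
  linarith [ge_of_tendsto hAbel hpos]
end

section
/- Backlund's Lemma: Let f be holomorphic on the closed disc |z - a| ≤ R with |f(z)| ≤ M there, let b satisfy 0 < |b - a| < R, and assume f does not vanish on the segment [a, b]. Then |Re((1/(2πi)) ∫_a^b f'(z)/f(z) dz)| ≤ (1/2) · log(M/|f(a)|) / log(R/|b - a|). -/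
/-!
Along the segment write `f (a + t (b - a)) = f a * exp (X t)`, where `X t` integrates the
logarithmic derivative; the quantity to bound is `Im X(1) / 2π`. With
`w z = f (a + z (b - a)) / f a`, if `n |Im X(1)| > (k - 1/2) π` then by the intermediate value
theorem `Re (w t ^ n)` vanishes at `k` points of `(0, 1]`. So `w z ^ n + conj (w (conj z)) ^ n`,
which equals `2` at the origin and is at most `2 (M / |f a|) ^ n` on the circle of radius
`R / |b - a|`, has `k` zeros in the unit disc, and dividing them out by Blaschke factors gives
`(R / |b - a|) ^ k ≤ (M / |f a|) ^ n`. Letting `n → ∞` with `k ≈ n |Im X(1)| / π` yields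
`|Im X(1)| log (R / |b - a|) ≤ π log (M / |f a|)`.
-/

open Complex ComplexConjugate Metric Set

section ExpIntegral

variable {g g' : ℝ → ℂ} {s : Set ℝ} {a b t : ℝ}

theorem hasDerivAt_integral_div (hs : IsOpen s) (hab : Icc a b ⊆ s)
    (hg : ∀ x ∈ s, HasDerivAt g (g' x) x) (hg' : ContinuousOn g' s) (hg0 : ∀ x ∈ s, g x ≠ 0)
    (ht : t ∈ Icc a b) :
    HasDerivAt (fun x => ∫ τ in a..x, g' τ / g τ) (g' t / g t) t := by
  have hq : ContinuousOn (fun x => g' x / g x) s :=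
    hg'.div (fun x hx => (hg x hx).continuousAt.continuousWithinAt) hg0
  refine intervalIntegral.integral_hasDerivAt_right (hq.mono ?_).intervalIntegrable
    (hq.stronglyMeasurableAtFilter hs t (hab ht)) (hq.continuousAt (hs.mem_nhds (hab ht)))
  rw [uIcc_of_le ht.1]
  exact (Icc_subset_Icc_right ht.2).trans hab

theorem eq_mul_exp_integral_div (hs : IsOpen s) (hab : Icc a b ⊆ s)
    (hg : ∀ x ∈ s, HasDerivAt g (g' x) x) (hg' : ContinuousOn g' s) (hg0 : ∀ x ∈ s, g x ≠ 0)
    (ht : t ∈ Icc a b) :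
    g t = g a * exp (∫ τ in a..t, g' τ / g τ) := by
  set X := fun x => ∫ τ in a..x, g' τ / g τ
  have hderiv : ∀ x ∈ uIcc a t, HasDerivAt (fun x => g x * exp (-X x)) 0 x := by
    intro x hx
    rw [uIcc_of_le ht.1] at hx
    have hx' : x ∈ Icc a b := ⟨hx.1, hx.2.trans ht.2⟩
    refine ((hg x (hab hx')).mul
      (hasDerivAt_integral_div hs hab hg hg' hg0 hx').neg.cexp).congr_deriv ?_
    field_simp [hg0 x (hab hx')]
    ring
  have hconst := intervalIntegral.integral_eq_sub_of_hasDerivAt hderiv intervalIntegrable_const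
  simp only [intervalIntegral.integral_zero, X, intervalIntegral.integral_same, neg_zero, exp_zero,
    mul_one] at hconst
  rw [eq_comm, sub_eq_zero] at hconst
  rw [← hconst, mul_assoc, ← exp_add, neg_add_cancel, exp_zero, mul_one]

end ExpIntegral

theorem exists_finset_card_cos_eq_zero {θ : ℝ → ℝ} {a b : ℝ} {k : ℕ} (hab : a ≤ b)
    (hθ : ContinuousOn θ (Icc a b)) (ha : θ a = 0) (hk : (k - 1 / 2) * Real.pi < θ b) :
    ∃ T : Finset ℝ, T.card = k ∧ ∀ t ∈ T, t ∈ Ioc a b ∧ Real.cos (θ t) = 0 := by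
  have hlevel : ∀ j : Fin k, Real.pi / 2 + j * Real.pi ∈ θ '' Icc a b := by
    intro j
    refine intermediate_value_Icc hab hθ ⟨by rw [ha]; positivity, ?_⟩
    have : (j : ℝ) + 1 ≤ k := by exact_mod_cast j.2
    nlinarith [Real.pi_pos]
  choose t ht hθt using hlevel
  have hinj : Function.Injective t := by
    intro i j hij
    have : (i : ℝ) * Real.pi = j * Real.pi := by linarith [hθt i, hθt j, congrArg θ hij]
    exact Fin.ext (by exact_mod_cast mul_right_cancel₀ Real.pi_ne_zero this)
  refine ⟨Finset.univ.image t, by simp [Finset.card_image_of_injective _ hinj], ?_⟩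
  simp only [Finset.mem_image, Finset.mem_univ, true_and, forall_exists_index,
    forall_apply_eq_imp_iff]
  intro j
  refine ⟨⟨(ht j).1.lt_of_ne ?_, (ht j).2⟩, ?_⟩
  · intro hj
    have := hθt j
    rw [← hj, ha] at this
    have : 0 < Real.pi / 2 + j * Real.pi := by positivity
    linarith
  · rw [hθt j, Real.cos_add_nat_mul_pi, Real.cos_pi_div_two, mul_zero]

theorem exists_finset_card_cos_eq_zero_of_lt_abs {θ : ℝ → ℝ} {a b : ℝ} {k : ℕ} (hab : a ≤ b)
    (hθ : ContinuousOn θ (Icc a b)) (ha : θ a = 0) (hk : (k - 1 / 2) * Real.pi < |θ b|) :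
    ∃ T : Finset ℝ, T.card = k ∧ ∀ t ∈ T, t ∈ Ioc a b ∧ Real.cos (θ t) = 0 := by
  rcases le_or_gt 0 (θ b) with hb | hb
  · exact exists_finset_card_cos_eq_zero hab hθ ha (by rwa [abs_of_nonneg hb] at hk)
  · obtain ⟨T, hTk, hT⟩ := exists_finset_card_cos_eq_zero (θ := fun t => -θ t) hab hθ.neg
      (by simp [ha]) (by rwa [abs_of_neg hb] at hk)
    exact ⟨T, hTk, fun t ht => by simpa only [Real.cos_neg] using hT t ht⟩

/-- `h` divided by the Blaschke factor `R * (z - c) / (R ^ 2 - conj c * z)`, which vanishes at `c`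
and has modulus one on the circle `‖z‖ = R`. -/
noncomputable def divBlaschke (h : ℂ → ℂ) (R : ℝ) (c z : ℂ) : ℂ :=
  ((R : ℂ) ^ 2 - conj c * z) / R * dslope h c z

section Blaschke

variable {h : ℂ → ℂ} {R : ℝ} {c z : ℂ}

theorem DiffContOnCl.divBlaschke (hh : DiffContOnCl ℂ h (ball 0 R)) (hc : c ∈ ball 0 R) :
    DiffContOnCl ℂ (divBlaschke h R c) (ball 0 R) := by
  have hslope : DiffContOnCl ℂ (dslope h c) (ball 0 R) :=
    .mk_ball ((differentiableOn_dslope (isOpen_ball.mem_nhds hc)).mpr hh.differentiableOn)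
      ((continuousOn_dslope (closedBall_mem_nhds_of_mem hc)).mpr
        ⟨hh.continuousOn_ball, hh.differentiableAt isOpen_ball hc⟩)
  have hfactor : Differentiable ℂ fun z => ((R : ℂ) ^ 2 - conj c * z) / R := by fun_prop
  exact hfactor.diffContOnCl.smul hslope

theorem divBlaschke_eq_zero (hc0 : h c = 0) (hz : h z = 0) (hzc : z ≠ c) :
    divBlaschke h R c z = 0 := by
  simp [divBlaschke, dslope_of_ne _ hzc, slope_def_field, hc0, hz]

theorem norm_divBlaschke_of_mem_sphere (hc0 : h c = 0) (hc : c ∈ ball 0 R)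
    (hz : z ∈ sphere 0 R) : ‖divBlaschke h R c z‖ = ‖h z‖ := by
  rw [mem_ball_zero_iff] at hc
  rw [mem_sphere_zero_iff_norm] at hz
  have hR : 0 < R := (norm_nonneg c).trans_lt hc
  have hzc : z - c ≠ 0 := sub_ne_zero.mpr fun h => by rw [h] at hz; exact hc.ne hz
  -- on the circle `R ^ 2 = z * conj z`
  have hfactor : (R : ℂ) ^ 2 - conj c * z = z * conj (z - c) := by
    rw [map_sub, mul_sub, mul_conj, ← ofReal_pow, normSq_eq_norm_sq, hz]
    ring
  rw [divBlaschke, dslope_of_ne _ (sub_ne_zero.mp hzc), slope_def_field, hc0, sub_zero,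
    hfactor, norm_mul, norm_div, norm_mul, norm_conj, norm_div, hz, norm_real,
    Real.norm_of_nonneg hR.le]
  field_simp [norm_ne_zero_iff.mpr hzc]

theorem norm_divBlaschke_zero (hc0 : h c = 0) (hc : c ≠ 0) (hR : 0 ≤ R) :
    ‖divBlaschke h R c 0‖ = R / ‖c‖ * ‖h 0‖ := by
  rw [divBlaschke, dslope_of_ne _ hc.symm, slope_def_field, hc0]
  simp only [mul_zero, sub_zero, zero_sub, norm_mul, norm_div, norm_pow, norm_neg, norm_real,
    Real.norm_of_nonneg hR]
  rcases hR.eq_or_lt with rfl | hR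
  · simp
  · field_simp

theorem DiffContOnCl.norm_apply_zero_mul_pow_card_le {r K : ℝ} (hr : 0 < r) (hrR : r < R)
    (hh : DiffContOnCl ℂ h (ball 0 R)) (hK : ∀ z ∈ sphere 0 R, ‖h z‖ ≤ K) {Z : Finset ℂ}
    (hZ : ∀ z ∈ Z, z ∈ closedBall 0 r ∧ h z = 0) :
    ‖h 0‖ * (R / r) ^ Z.card ≤ K := by
  have hR : 0 < R := hr.trans hrR
  induction Z using Finset.induction_on generalizing h with
  | empty =>
    simpa using Complex.norm_le_of_forall_mem_frontier_norm_le isBounded_ball hh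
      (by rwa [frontier_ball _ hR.ne']) (subset_closure (mem_ball_self hR))
  | insert c Z hcZ ih =>
    obtain ⟨hcr, hc0⟩ := hZ c (Finset.mem_insert_self c Z)
    have hcR : c ∈ ball 0 R := closedBall_subset_ball hrR hcr
    rcases eq_or_ne c 0 with rfl | hc
    · rw [hc0, norm_zero, zero_mul]
      exact (norm_nonneg _).trans (hK R (by simp [hR.le]))
    have hquot := ih (hh.divBlaschke hcR)
      (fun z hz => (norm_divBlaschke_of_mem_sphere hc0 hcR hz).trans_le (hK z hz))
      (fun z hz => ⟨(hZ z (Finset.mem_insert_of_mem hz)).1,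
        divBlaschke_eq_zero hc0 (hZ z (Finset.mem_insert_of_mem hz)).2
          (ne_of_mem_of_not_mem hz hcZ)⟩)
    rw [norm_divBlaschke_zero hc0 hc hR.le] at hquot
    calc ‖h 0‖ * (R / r) ^ (insert c Z).card = R / r * ‖h 0‖ * (R / r) ^ Z.card := by
          rw [Finset.card_insert_of_notMem hcZ, pow_succ]; ring
      _ ≤ R / ‖c‖ * ‖h 0‖ * (R / r) ^ Z.card := by gcongr; simpa using hcr
      _ ≤ K := hquot

end Blaschke

theorem DiffContOnCl.conj_comp_conj {w : ℂ → ℂ} {R : ℝ} (hw : DiffContOnCl ℂ w (ball 0 R)) :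
    DiffContOnCl ℂ (conj ∘ w ∘ conj) (ball 0 R) := by
  have hmaps : ∀ z, z ∈ closedBall (0 : ℂ) R → conj z ∈ closedBall (0 : ℂ) R := by simp
  refine .mk_ball (fun z hz => ?_) ?_
  · have hz' : conj z ∈ ball (0 : ℂ) R := by simpa using hz
    exact (differentiableAt_conj_conj_iff.mpr
      (hw.differentiableAt isOpen_ball hz')).differentiableWithinAt
  · exact continuous_conj.comp_continuousOn
      (hw.continuousOn_ball.comp continuous_conj.continuousOn hmaps)

theorem card_mul_log_le_of_re_pow_eq_zero {w : ℂ → ℂ} {R r K : ℝ} (hr : 0 < r) (hrR : r < R)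
    (hw : DiffContOnCl ℂ w (ball 0 R)) (hK : ∀ z ∈ sphere 0 R, ‖w z‖ ≤ K) (hw0 : w 0 = 1)
    {n : ℕ} {T : Finset ℝ} (hT : ∀ t ∈ T, t ∈ Ioc 0 r ∧ (w t ^ n).re = 0) :
    T.card * Real.log (R / r) ≤ n * Real.log K := by
  set v : ℂ → ℂ := fun z => w z ^ n
  have hv : DiffContOnCl ℂ v (ball 0 R) := (differentiable_pow n).comp_diffContOnCl hw
  -- `H` is real on the real axis, where it equals `2 * Re (w t ^ n)`
  set H : ℂ → ℂ := v + conj ∘ v ∘ conj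
  have hvK : ∀ z ∈ sphere 0 R, ‖v z‖ ≤ K ^ n := fun z hz => by
    rw [norm_pow]; exact pow_le_pow_left₀ (norm_nonneg _) (hK z hz) n
  have hHK : ∀ z ∈ sphere 0 R, ‖H z‖ ≤ 2 * K ^ n := by
    intro z hz
    calc ‖H z‖ ≤ ‖v z‖ + ‖v (conj z)‖ := by
          have := norm_add_le (v z) (conj (v (conj z)))
          rwa [norm_conj] at this
      _ ≤ K ^ n + K ^ n := add_le_add (hvK z hz) (hvK _ (by simpa using hz))
      _ = 2 * K ^ n := by ring
  have hH0 : H 0 = 2 := by norm_num [H, v, hw0]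
  have hZ : ∀ z ∈ T.image ((↑) : ℝ → ℂ), z ∈ closedBall 0 r ∧ H z = 0 := by
    simp only [Finset.mem_image, forall_exists_index, and_imp, forall_apply_eq_imp_iff₂]
    intro t ht
    obtain ⟨⟨ht0, htr⟩, hre⟩ := hT t ht
    refine ⟨by simpa [abs_of_pos ht0] using htr, ?_⟩
    change v t + conj (v (conj (t : ℂ))) = 0
    rw [conj_ofReal, add_conj, hre]
    simp
  have hpow := (hv.add hv.conj_comp_conj).norm_apply_zero_mul_pow_card_le hr hrR hHK hZ
  change ‖H 0‖ * _ ≤ _ at hpow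
  rw [hH0, Finset.card_image_of_injective T ofReal_injective, Complex.norm_two] at hpow
  rw [← Real.log_pow, ← Real.log_pow]
  exact Real.log_le_log (by have := hr.trans hrR; positivity) (by linarith)

theorem mul_le_mul_of_forall_sub_half_mul_lt {x c D L : ℝ} (hx : 0 ≤ x) (hc : 0 < c) (hD : 0 < D)
    (h : ∀ n k : ℕ, (k - 1 / 2) * c < n * x → k * D ≤ n * L) : x * D ≤ c * L := by
  by_contra! hlt
  obtain ⟨n, hn⟩ := exists_nat_gt (c * D / (x * D - c * L))
  rw [div_lt_iff₀ (by linarith)] at hn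
  set k := ⌊n * x / c⌋₊
  have hk : (k : ℝ) ≤ n * x / c := Nat.floor_le (by positivity)
  have hk' : n * x / c < k + 1 := Nat.lt_floor_add_one _
  rw [le_div_iff₀ hc] at hk
  rw [div_lt_iff₀ hc] at hk'
  have := h n k (by linarith)
  nlinarith

theorem re_one_div_two_pi_I_mul (z : ℂ) :
    (1 / (2 * Real.pi * I) * z).re = z.im / (2 * Real.pi) := by
  have : 1 / (2 * Real.pi * I) * z = ((1 / (2 * Real.pi) : ℝ) : ℂ) * (-I * z) := by
    push_cast
    field_simp
    rw [I_sq]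
    ring
  rw [this, re_ofReal_mul]
  simp only [neg_mul, neg_re, mul_re, I_re, zero_mul, I_im, one_mul, zero_sub, neg_neg]
  ring

theorem abs_im_integral_logDeriv_mul_log_le {w : ℂ → ℂ} {R K : ℝ} (hR : 1 < R)
    (hw : DiffContOnCl ℂ w (ball 0 R)) (hK : ∀ z ∈ sphere 0 R, ‖w z‖ ≤ K) (hw0 : w 0 = 1)
    (hw_ne : ∀ t ∈ Icc (0 : ℝ) 1, w t ≠ 0) :
    |(∫ t in (0 : ℝ)..1, logDeriv w t).im| * Real.log R ≤ Real.pi * Real.log K := by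
  set s : Set ℝ := (↑) ⁻¹' (ball 0 R ∩ w ⁻¹' {0}ᶜ)
  have hs : IsOpen s :=
    ((hw.continuousOn_ball.mono ball_subset_closedBall).isOpen_inter_preimage isOpen_ball
      isOpen_compl_singleton).preimage continuous_ofReal
  have hIcc : Icc 0 1 ⊆ s := fun t ht =>
    ⟨by simpa [abs_of_nonneg ht.1] using ht.2.trans_lt hR, hw_ne t ht⟩
  have hg : ∀ x ∈ s, HasDerivAt (fun t : ℝ => w t) (deriv w x) x := fun x hx =>
    (hw.differentiableAt isOpen_ball hx.1).hasDerivAt.comp_ofReal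
  have hg' : ContinuousOn (fun t : ℝ => deriv w t) s :=
    (hw.differentiableOn.analyticOnNhd isOpen_ball).deriv.continuousOn.comp
      continuous_ofReal.continuousOn fun x hx => hx.1
  have hg0 : ∀ x ∈ s, w x ≠ 0 := fun x hx => hx.2
  set X : ℝ → ℂ := fun t => ∫ τ in (0 : ℝ)..t, deriv w τ / w τ
  have hX : ContinuousOn X (Icc 0 1) := fun t ht =>
    (hasDerivAt_integral_div hs hIcc hg hg' hg0 ht).continuousAt.continuousWithinAt
  have hexp : ∀ t ∈ Icc (0 : ℝ) 1, w t = exp (X t) := fun t ht => by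
    simpa [hw0] using eq_mul_exp_integral_div hs hIcc hg hg' hg0 ht
  refine mul_le_mul_of_forall_sub_half_mul_lt (abs_nonneg _) Real.pi_pos (Real.log_pos hR) ?_
  intro n k hk
  obtain ⟨T, rfl, hT⟩ := exists_finset_card_cos_eq_zero_of_lt_abs (θ := fun t => n * (X t).im)
    zero_le_one (continuousOn_const.mul (continuous_im.comp_continuousOn hX)) (by simp [X])
    (by rwa [abs_mul, Nat.abs_cast])
  simpa using card_mul_log_le_of_re_pow_eq_zero one_pos hR hw hK hw0 (n := n) (T := T)
    fun t ht => ⟨(hT t ht).1, by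
      rw [hexp t (Ioc_subset_Icc_self (hT t ht).1), ← exp_nat_mul, exp_re]
      simp [(hT t ht).2]⟩

theorem logDeriv_const_mul_comp_add_mul {𝕜 : Type*} [NontriviallyNormedField 𝕜] {f : 𝕜 → 𝕜}
    {a c u t : 𝕜} (hc : c ≠ 0) (hf : DifferentiableAt 𝕜 f (a + t * u)) :
    logDeriv (fun z => c * f (a + z * u)) t = u * logDeriv f (a + t * u) := by
  rw [logDeriv_const_mul _ _ hc]
  change logDeriv (f ∘ fun z => a + z * u) t = _
  rw [logDeriv_comp (g := fun z => a + z * u) hf (by fun_prop)]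
  simp [mul_comm]

theorem backlund_lemma_general (f : ℂ → ℂ) (a b : ℂ) (R M : ℝ)
    (hf : DifferentiableOn ℂ f (Metric.closedBall a R))
    (hM : ∀ z ∈ Metric.closedBall a R, ‖f z‖ ≤ M)
    (hb0 : 0 < ‖b - a‖) (hbR : ‖b - a‖ < R)
    (hnz : ∀ z ∈ segment ℝ a b, f z ≠ 0) :
    |((1 / (2 * Real.pi * I)) * ∫ t in (0:ℝ)..1,
        (b - a) * deriv f (a + t • (b - a)) / f (a + t • (b - a))).re| ≤
      (1 / 2) * Real.log (M / ‖f a‖) /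
        Real.log (R / ‖b - a‖) := by
  have hfa : f a ≠ 0 := hnz a (left_mem_segment ℝ a b)
  have hseg : ∀ t ∈ Icc (0 : ℝ) 1, a + t * (b - a) ∈ segment ℝ a b := fun t ht => by
    rw [segment_eq_image']
    exact ⟨t, ht, by simp [real_smul]⟩
  have hdiff : ∀ z ∈ segment ℝ a b, DifferentiableAt ℂ f z := fun z hz =>
    hf.differentiableAt <| closedBall_mem_nhds_of_mem <| (convex_ball a R).segment_subset
      (mem_ball_self (hb0.trans hbR)) (mem_ball_iff_norm.mpr hbR) hz
  have hmaps : MapsTo (fun z => a + z * (b - a)) (closedBall 0 (R / ‖b - a‖)) (closedBall a R) :=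
    fun z hz => by simpa [norm_mul, ← le_div_iff₀ hb0] using hz
  set w : ℂ → ℂ := fun z => (f a)⁻¹ * f (a + z * (b - a))
  have hw : DiffContOnCl ℂ w (ball 0 (R / ‖b - a‖)) :=
    ((hf.comp (by fun_prop) hmaps).const_mul _).diffContOnCl_ball subset_rfl
  have hK : ∀ z ∈ sphere 0 (R / ‖b - a‖), ‖w z‖ ≤ M / ‖f a‖ := fun z hz => by
    rw [norm_mul, norm_inv, inv_mul_eq_div]
    gcongr
    exact hM _ (hmaps (sphere_subset_closedBall hz))
  have key := abs_im_integral_logDeriv_mul_log_le ((one_lt_div hb0).mpr hbR) hw hK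
    (by simp [w, hfa]) fun t ht => mul_ne_zero (inv_ne_zero hfa) (hnz _ (hseg t ht))
  have hintegrand : ∀ t ∈ uIcc (0 : ℝ) 1,
      logDeriv w t = (b - a) * deriv f (a + t • (b - a)) / f (a + t • (b - a)) := by
    intro t ht
    rw [uIcc_of_le zero_le_one] at ht
    rw [logDeriv_const_mul_comp_add_mul (inv_ne_zero hfa) (hdiff _ (hseg t ht)), logDeriv_apply,
      real_smul, mul_div_assoc]
  rw [intervalIntegral.integral_congr hintegrand] at key
  rw [re_one_div_two_pi_I_mul, abs_div, abs_of_pos Real.two_pi_pos,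
    div_le_div_iff₀ Real.two_pi_pos (Real.log_pos ((one_lt_div hb0).mpr hbR))]
  linarith

/-- **Backlund's Lemma.** If `f` is holomorphic on the closed disc `|z - a| ≤ R`,
bounded by `M` there, `0 < |b - a| < R`, and `f` has no zero on the segment `[a, b]`,
then the real part of `(1/(2πi)) ∫_a^b f'(z)/f(z) dz` (taken along the segment)
is at most `(1/2) log(M/|f(a)|) / log(R/|b-a|)` in absolute value. -/
theorem backlund_lemma (f : ℂ → ℂ) (a b : ℂ) (R M : ℝ)
    (hf : DifferentiableOn ℂ f (Metric.closedBall a R))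
    (hM : ∀ z ∈ Metric.closedBall a R, ‖f z‖ ≤ M)
    (hb0 : 0 < ‖b - a‖) (hbR : ‖b - a‖ < R)
    (hfa : ‖f a‖ ≤ M)
    (hnz : ∀ z ∈ segment ℝ a b, f z ≠ 0) :
    |((1 / (2 * Real.pi * I)) * ∫ t in (0:ℝ)..1,
        (b - a) * deriv f (a + t • (b - a)) / f (a + t • (b - a))).re| ≤
      (1 / 2) * Real.log (M / ‖f a‖) /
        Real.log (R / ‖b - a‖) :=
  backlund_lemma_general f a b R M hf hM hb0 hbR hnz
end

section
/- The function f(y) = (1 - e^{-πy² + πωy})/(1 - e^{2πωy}), with ω = e^{πi/4}, extends to an entire function of y: every zero of the denominator 1 - e^{2πωy} is also a zero of the numerator 1 - e^{-πy² + πωy}. -/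
/-!
Where `1 - e^{2πωy}` vanishes, `ωy = k i` with `k ∈ ℤ`, so `y² = -k²/ω² = k² i` and
`-πy² + πωy = -π i k(k - 1) ∈ 2πiℤ`, because `k(k - 1)` is even. These zeros of the
denominator `D` are simple (its derivative never vanishes), so the quotient `N/D` is
holomorphic off them and near each one agrees with `dslope N z / dslope D z`, which is
holomorphic with nonvanishing denominator.
-/

open Complex Real

/-- `ω = e^{πi/4}`. -/
noncomputable def omegaRoot : ℂ := Complex.exp (π * I / 4)

open Filter Topology

lemma omegaRoot_ne_zero : omegaRoot ≠ 0 := Complex.exp_ne_zero _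

lemma omegaRoot_sq : omegaRoot ^ 2 = I := by
  rw [omegaRoot, ← Complex.exp_nat_mul,
    show (2 : ℕ) * (π * I / 4 : ℂ) = π / 2 * I by push_cast; ring,
    Complex.exp_mul_I, ← ofReal_ofNat, ← ofReal_div, ← ofReal_cos, ← ofReal_sin,
    Real.cos_pi_div_two, Real.sin_pi_div_two]
  simp

lemma exp_gaussian_eq_one_of_exp_eq_one {y : ℂ} (h : Complex.exp (2 * π * omegaRoot * y) = 1) :
    Complex.exp (-π * y ^ 2 + π * omegaRoot * y) = 1 := by
  obtain ⟨k, hk⟩ := Complex.exp_eq_one_iff.mp h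
  have hπ : (π : ℂ) ≠ 0 := ofReal_ne_zero.mpr Real.pi_ne_zero
  have hωy : omegaRoot * y = k * I := by
    apply mul_left_cancel₀ (mul_ne_zero two_ne_zero hπ)
    linear_combination hk
  have hy2 : y ^ 2 = (k : ℂ) ^ 2 * I := by
    apply mul_left_cancel₀ (pow_ne_zero 2 omegaRoot_ne_zero)
    linear_combination (omegaRoot * y + k * I) * hωy - (k : ℂ) ^ 2 * I * omegaRoot_sq
  obtain ⟨m, hm⟩ : Even ((k - 1) * (k - 1 + 1)) := Int.even_mul_succ_self _
  have hmC : ((k : ℂ) - 1) * ((k : ℂ) - 1 + 1) = m + m := by exact_mod_cast hm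
  refine Complex.exp_eq_one_iff.mpr ⟨-m, ?_⟩
  push_cast
  linear_combination (-(π : ℂ)) * hy2 + (π : ℂ) * hωy + (-(π : ℂ) * I) * hmC

lemma deriv_one_sub_exp_const_mul_ne_zero {c : ℂ} (hc : c ≠ 0) (z : ℂ) :
    deriv (fun y => 1 - Complex.exp (c * y)) z ≠ 0 := by
  have h := ((hasDerivAt_id z).const_mul c).cexp.const_sub 1
  simp only [id, mul_one] at h
  rw [h.deriv, neg_ne_zero]
  exact mul_ne_zero (Complex.exp_ne_zero _) hc

noncomputable def lhopitalQuotient (N D : ℂ → ℂ) (y : ℂ) : ℂ :=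
  if D y = 0 then deriv N y / deriv D y else N y / D y

section lhopitalQuotient

variable {N D : ℂ → ℂ}

lemma lhopitalQuotient_eventuallyEq_div (hD : Continuous D) {z : ℂ} (hz : D z ≠ 0) :
    lhopitalQuotient N D =ᶠ[𝓝 z] fun y => N y / D y := by
  filter_upwards [hD.continuousAt.eventually_ne hz] with y hy
  exact if_neg hy

lemma lhopitalQuotient_eventuallyEq_dslope_div (hD : Differentiable ℂ D) {z : ℂ}
    (hDz : D z = 0) (hNz : N z = 0) (hD'z : deriv D z ≠ 0) :
    lhopitalQuotient N D =ᶠ[𝓝 z] fun y => dslope N z y / dslope D z y := by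
  have hne : ∀ᶠ y in 𝓝[≠] z, D y ≠ 0 := (hD z).hasDerivAt.eventually_ne (c := 0) hD'z
  filter_upwards [eventually_nhdsWithin_iff.mp hne] with y hy
  rcases eq_or_ne y z with rfl | hyz
  · simp [lhopitalQuotient, hDz]
  · rw [lhopitalQuotient, if_neg (hy hyz), dslope_of_ne _ hyz, dslope_of_ne _ hyz,
      slope_def_field, slope_def_field, hNz, hDz, sub_zero, sub_zero,
      div_div_div_cancel_right₀ (sub_ne_zero.mpr hyz)]

theorem differentiable_lhopitalQuotient (hN : Differentiable ℂ N) (hD : Differentiable ℂ D)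
    (hzeros : ∀ z, D z = 0 → N z = 0 ∧ deriv D z ≠ 0) :
    Differentiable ℂ (lhopitalQuotient N D) := by
  intro z
  by_cases hDz : D z = 0
  · obtain ⟨hNz, hD'z⟩ := hzeros z hDz
    have hdslope : ∀ {f : ℂ → ℂ}, Differentiable ℂ f → Differentiable ℂ (dslope f z) :=
      fun hf => differentiableOn_univ.mp <|
        (Complex.differentiableOn_dslope Filter.univ_mem).mpr hf.differentiableOn
    refine DifferentiableAt.congr_of_eventuallyEq ?_
      (lhopitalQuotient_eventuallyEq_dslope_div hD hDz hNz hD'z)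
    exact (hdslope hN z).div (hdslope hD z) (by rwa [dslope_same])
  · exact ((hN z).div (hD z) hDz).congr_of_eventuallyEq
      (lhopitalQuotient_eventuallyEq_div hD.continuous hDz)

end lhopitalQuotient

/-- The function `f(y) = (1 - e^{-πy² + πωy})/(1 - e^{2πωy})` extends to an
entire function: every zero of the denominator is a zero of the numerator. -/
theorem gabcke_integrand_entire :
    (∃ g : ℂ → ℂ, Differentiable ℂ g ∧
      ∀ y : ℂ, 1 - Complex.exp (2 * π * omegaRoot * y) ≠ 0 →
        g y = (1 - Complex.exp (-π * y ^ 2 + π * omegaRoot * y)) /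
          (1 - Complex.exp (2 * π * omegaRoot * y))) ∧
    ∀ y : ℂ, Complex.exp (2 * π * omegaRoot * y) = 1 →
      Complex.exp (-π * y ^ 2 + π * omegaRoot * y) = 1 := by
  have hc : (2 * π * omegaRoot : ℂ) ≠ 0 :=
    mul_ne_zero (mul_ne_zero two_ne_zero (ofReal_ne_zero.mpr Real.pi_ne_zero)) omegaRoot_ne_zero
  have hzeros : ∀ y, 1 - Complex.exp (2 * π * omegaRoot * y) = 0 →
      1 - Complex.exp (-π * y ^ 2 + π * omegaRoot * y) = 0 ∧
        deriv (fun y => 1 - Complex.exp (2 * π * omegaRoot * y)) y ≠ 0 := fun y hy =>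
    ⟨sub_eq_zero.mpr (exp_gaussian_eq_one_of_exp_eq_one (sub_eq_zero.mp hy).symm).symm,
      deriv_one_sub_exp_const_mul_ne_zero hc y⟩
  refine ⟨⟨_, differentiable_lhopitalQuotient (by fun_prop) (by fun_prop) hzeros,
    fun y hy => if_neg hy⟩, fun y => exp_gaussian_eq_one_of_exp_eq_one⟩
end

section
/- The function G(t) = ∑_{n=1}^∞ n^{-1/2-it} · t/(2πn² + t), initially defined for real t, extends to a meromorphic function on ℂ whose poles are contained in the set {(2k - 1/2)i : k ∈ ℤ, k ≥ 1} ∪ {-2πn² : n ∈ ℤ, n ≥ 1}. -/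
/-!
For `‖z‖ < 2πn²` expand `z / (2πn² + z) = ∑_{k ≥ 1} (-1)^(k-1) (z / 2πn²)^k`. Summing over
`n > N` turns the tail of the series into `∑_{k ≥ 1} (-1)^(k-1) (z / 2π)^k ζ_{>N}(1/2 + 2k + iz)`,
with `ζ_{>N}(s) = ζ(s) - ∑_{n ≤ N} n^(-s)`. Since `ζ_{>N}(s) = O((N+1)^(2 - Re s))`, the terms
decay like `(‖z‖ / 2π(N+1)²)^k`, so on `‖z‖ < 2π(N+1)²` this series is analytic apart from the
poles of finitely many terms, which come from the pole of `ζ` at `1`, i.e. `z = (2k - 1/2)i`;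
the head `∑_{n ≤ N}` contributes the poles `-2πn²`. Continuations for different `N` agree where
both are defined, hence glue to a function on `ℂ`. On the real line the double series converges
absolutely, and exchanging the two sums recovers `G`.
-/

open Complex Real

/-- The poles of the meromorphic continuation of `G`:
`{(2k-1/2)i : k ≥ 1} ∪ {-2πn² : n ≥ 1}`. -/
def GPoles : Set ℂ :=
  {z : ℂ | ∃ k : ℕ, 1 ≤ k ∧ z = (2 * k - 1 / 2) * I} ∪
    {z : ℂ | ∃ n : ℕ, 1 ≤ n ∧ z = -2 * π * n ^ 2}

open Filter Topology

/-- The analytic continuation of `∑_{n > N} n ^ (-s)`. -/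
noncomputable def zetaTail (N : ℕ) (s : ℂ) : ℂ :=
  riemannZeta s - ∑ n ∈ Finset.range N, ((n : ℂ) + 1) ^ (-s)

lemma norm_nat_add_one_cpow (m : ℕ) (s : ℂ) : ‖((m : ℂ) + 1) ^ s‖ = ((m : ℝ) + 1) ^ s.re := by
  exact_mod_cast Complex.norm_natCast_cpow_of_pos m.succ_pos s

lemma nat_add_one_mem_slitPlane (m : ℕ) : (m : ℂ) + 1 ∈ slitPlane := by
  exact_mod_cast natCast_mem_slitPlane.mpr m.succ_ne_zero

lemma summable_nat_add_one_rpow_neg {σ : ℝ} (hσ : 1 < σ) :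
    Summable fun n : ℕ => ((n : ℝ) + 1) ^ (-σ) := by
  exact_mod_cast (summable_nat_add_iff 1).mpr (Real.summable_nat_rpow.mpr (neg_lt_neg hσ))

lemma summable_norm_nat_add_one_cpow_neg {s : ℂ} (hs : 1 < s.re) :
    Summable fun n : ℕ => ‖((n : ℂ) + 1) ^ (-s)‖ := by
  simpa only [norm_nat_add_one_cpow, neg_re] using summable_nat_add_one_rpow_neg hs

lemma hasSum_nat_add_one_rpow_neg_two :
    HasSum (fun n : ℕ => ((n : ℝ) + 1) ^ (-2 : ℝ)) (π ^ 2 / 6) := by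
  have h := (hasSum_nat_add_iff' 1).mpr hasSum_zeta_two
  norm_num at h
  simpa [Real.rpow_neg, Real.rpow_two, add_nonneg] using h

lemma zetaTail_eq_tsum (N : ℕ) {s : ℂ} (hs : 1 < s.re) :
    zetaTail N s = ∑' n : ℕ, (((n + N : ℕ) : ℂ) + 1) ^ (-s) := by
  have hζ : riemannZeta s = ∑' n : ℕ, ((n : ℂ) + 1) ^ (-s) := by
    simp only [zeta_eq_tsum_one_div_nat_add_one_cpow hs, cpow_neg, one_div]
  rw [zetaTail, hζ, ← (summable_norm_nat_add_one_cpow_neg hs).of_norm.sum_add_tsum_nat_add N]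
  push_cast
  ring

lemma zetaTail_succ (N : ℕ) (s : ℂ) :
    zetaTail (N + 1) s = zetaTail N s - ((N : ℂ) + 1) ^ (-s) := by
  rw [zetaTail, zetaTail, Finset.sum_range_succ]
  ring

lemma rpow_neg_nat_add_le (n N : ℕ) {σ : ℝ} (hσ : 2 ≤ σ) :
    (((n + N : ℕ) : ℝ) + 1) ^ (-σ) ≤ ((n : ℝ) + 1) ^ (-2 : ℝ) * ((N : ℝ) + 1) ^ (2 - σ) := by
  have hpos : (0 : ℝ) < ((n + N : ℕ) : ℝ) + 1 := by positivity
  rw [show -σ = -2 + (2 - σ) by ring, Real.rpow_add hpos]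
  push_cast
  exact mul_le_mul
    (rpow_le_rpow_of_nonpos (by positivity) (by linarith [N.cast_nonneg (α := ℝ)]) (by norm_num))
    (rpow_le_rpow_of_nonpos (by positivity) (by linarith [n.cast_nonneg (α := ℝ)]) (by linarith))
    (by positivity) (by positivity)

lemma tsum_norm_cpow_neg_nat_add_le (N : ℕ) {s : ℂ} (hs : 2 ≤ s.re) :
    ∑' n : ℕ, ‖(((n + N : ℕ) : ℂ) + 1) ^ (-s)‖ ≤ π ^ 2 / 6 * ((N : ℝ) + 1) ^ (2 - s.re) := by
  simp only [norm_nat_add_one_cpow, neg_re]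
  rw [← hasSum_nat_add_one_rpow_neg_two.tsum_eq, ← tsum_mul_right]
  exact Summable.tsum_le_tsum (fun n => rpow_neg_nat_add_le n N hs)
    ((summable_nat_add_iff N).mpr (summable_nat_add_one_rpow_neg (by linarith)))
    (hasSum_nat_add_one_rpow_neg_two.summable.mul_right _)

lemma norm_zetaTail_le (N : ℕ) {s : ℂ} (hs : 2 ≤ s.re) :
    ‖zetaTail N s‖ ≤ π ^ 2 / 6 * ((N : ℝ) + 1) ^ (2 - s.re) := by
  rw [zetaTail_eq_tsum N (by linarith)]
  have hsum : Summable fun n : ℕ => ‖(((n + N : ℕ) : ℂ) + 1) ^ (-s)‖ :=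
    (summable_nat_add_iff (f := fun n : ℕ => ‖((n : ℂ) + 1) ^ (-s)‖) N).mpr
      (summable_norm_nat_add_one_cpow_neg (by linarith))
  exact (norm_tsum_le_tsum_norm hsum).trans (tsum_norm_cpow_neg_nat_add_le N hs)

lemma analyticAt_riemannZeta {s : ℂ} (hs : s ≠ 1) : AnalyticAt ℂ riemannZeta s :=
  Complex.analyticAt_iff_eventually_differentiableAt.mpr <|
    (isOpen_compl_singleton.eventually_mem hs).mono fun _ h => differentiableAt_riemannZeta h

lemma meromorphicAt_riemannZeta (s : ℂ) : MeromorphicAt riemannZeta s := by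
  rcases ne_or_eq s 1 with hs | rfl
  · exact (analyticAt_riemannZeta hs).meromorphicAt
  -- by the residue formula, `(s - 1) * ζ s` has a removable singularity at `1`
  set g := Function.update (fun s => (s - 1) * riemannZeta s) 1 1
  have hg : AnalyticAt ℂ g 1 := by
    refine Complex.analyticAt_of_differentiable_on_punctured_nhds_of_continuousAt ?_
      (continuousAt_update_same.mpr riemannZeta_residue_one)
    filter_upwards [self_mem_nhdsWithin] with s (hs : s ≠ 1)
    have hgs : g =ᶠ[𝓝 s] fun s => (s - 1) * riemannZeta s :=
      (isOpen_compl_singleton.eventually_mem hs).mono fun _ h => Function.update_of_ne h _ _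
    exact ((differentiableAt_id.sub_const 1).mul
      (differentiableAt_riemannZeta hs)).congr_of_eventuallyEq hgs
  refine ((MeromorphicAt.id 1).sub (.const 1 1)).inv.mul hg.meromorphicAt |>.congr ?_
  filter_upwards [self_mem_nhdsWithin] with s (hs : s ≠ 1)
  have hs' : s - 1 ≠ 0 := sub_ne_zero.mpr hs
  simp [g, Function.update_of_ne hs, hs']

lemma analyticAt_zetaTail (N : ℕ) {s : ℂ} (hs : s ≠ 1) : AnalyticAt ℂ (zetaTail N) s :=
  (analyticAt_riemannZeta hs).sub (by fun_prop (disch := exact nat_add_one_mem_slitPlane _))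

lemma meromorphicAt_zetaTail (N : ℕ) (s : ℂ) : MeromorphicAt (zetaTail N) s :=
  (meromorphicAt_riemannZeta s).sub
    (by fun_prop (disch := exact nat_add_one_mem_slitPlane _) : AnalyticAt ℂ _ s).meromorphicAt

noncomputable def gTerm (m : ℕ) (z : ℂ) : ℂ :=
  ((m : ℂ) + 1) ^ (-(1 / 2 : ℂ) - I * z) * (z / (2 * π * ((m : ℂ) + 1) ^ 2 + z))

/-- With `k = j + 1`, `n = m + 1`: `gTerm m z = ∑_{k ≥ 1} (-1)^(k-1) (z/2π)^k n^(-(1/2 + 2k + iz))`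
for `‖z‖ < 2πn²`, expanding `z/(2πn² + z)` geometrically. -/
noncomputable def gCoeff (j : ℕ) (z : ℂ) : ℂ := (-1) ^ j * (z / (2 * π)) ^ (j + 1)

noncomputable def gExponent (j : ℕ) (z : ℂ) : ℂ := 1 / 2 + 2 * ((j : ℂ) + 1) + I * z

/-- Summing the expansion of `gTerm m` over `m ≥ N` gives a continuation of `G`
to `‖z‖ < 2π(N+1)²`. -/
noncomputable def gCont (N : ℕ) (z : ℂ) : ℂ :=
  ∑ m ∈ Finset.range N, gTerm m z + ∑' j, gCoeff j z * zetaTail N (gExponent j z)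

noncomputable def gGlobal (z : ℂ) : ℂ := gCont ⌈‖z‖⌉₊ z

lemma gExponent_re (j : ℕ) (z : ℂ) : (gExponent j z).re = 5 / 2 + 2 * j - z.im := by
  simp [gExponent]
  ring

lemma norm_gCoeff (j : ℕ) (z : ℂ) : ‖gCoeff j z‖ = (‖z‖ / (2 * π)) ^ (j + 1) := by
  simp [gCoeff, abs_of_pos pi_pos]

lemma hasSum_neg_one_pow_mul_pow_succ {w : ℂ} (hw : ‖w‖ < 1) :
    HasSum (fun j : ℕ => (-1) ^ j * w ^ (j + 1)) (w / (1 + w)) := by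
  have h := (hasSum_geometric_of_norm_lt_one (ξ := -w) (by rwa [norm_neg])).mul_left w
  rw [sub_neg_eq_add, ← div_eq_mul_inv] at h
  exact h.congr_fun fun j => by rw [neg_pow]; ring

lemma gCoeff_mul_cpow (m j : ℕ) (z : ℂ) :
    gCoeff j z * ((m : ℂ) + 1) ^ (-gExponent j z) = ((m : ℂ) + 1) ^ (-(1 / 2 : ℂ) - I * z) *
      ((-1) ^ j * (z / (2 * π * ((m : ℂ) + 1) ^ 2)) ^ (j + 1)) := by
  have hb : (m : ℂ) + 1 ≠ 0 := slitPlane_ne_zero (nat_add_one_mem_slitPlane m)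
  have hsplit : -gExponent j z = (-(1 / 2 : ℂ) - I * z) + -((2 * (j + 1) : ℕ) : ℂ) := by
    simp only [gExponent]
    push_cast
    ring
  rw [hsplit, cpow_add _ _ hb, cpow_neg, cpow_natCast, gCoeff, pow_mul]
  field_simp
  rw [← mul_pow]
  field_simp

lemma hasSum_gCoeff_mul_cpow {m : ℕ} {z : ℂ} (hz : ‖z‖ < 2 * π * ((m : ℝ) + 1) ^ 2) :
    HasSum (fun j => gCoeff j z * ((m : ℂ) + 1) ^ (-gExponent j z)) (gTerm m z) := by
  have hnorm : ‖(2 * π * ((m : ℂ) + 1) ^ 2 : ℂ)‖ = 2 * π * ((m : ℝ) + 1) ^ 2 := by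
    rw [show (2 * π * ((m : ℂ) + 1) ^ 2 : ℂ) = ((2 * π * ((m : ℝ) + 1) ^ 2 : ℝ) : ℂ) by
      push_cast; rfl, norm_real, norm_of_nonneg (by positivity)]
  have hd : (2 * π * ((m : ℂ) + 1) ^ 2 : ℂ) ≠ 0 := norm_pos_iff.mp (by rw [hnorm]; positivity)
  have hw : ‖z / (2 * π * ((m : ℂ) + 1) ^ 2)‖ < 1 := by
    rwa [norm_div, hnorm, div_lt_one (by positivity)]
  have hd' : 2 * π * ((m : ℂ) + 1) ^ 2 + z ≠ 0 := fun h => by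
    rw [eq_neg_of_add_eq_zero_right h, norm_neg, hnorm] at hz
    exact lt_irrefl _ hz
  have hval : gTerm m z = ((m : ℂ) + 1) ^ (-(1 / 2 : ℂ) - I * z) *
      (z / (2 * π * ((m : ℂ) + 1) ^ 2) / (1 + z / (2 * π * ((m : ℂ) + 1) ^ 2))) := by
    rw [gTerm]
    field_simp
  rw [hval]
  exact ((hasSum_neg_one_pow_mul_pow_succ hw).mul_left _).congr_fun (gCoeff_mul_cpow m · z)

noncomputable def gMajorant (N : ℕ) (R : ℝ) (j : ℕ) : ℝ :=
  π ^ 2 / 6 * ((N : ℝ) + 1) ^ (R + 3 / 2) * (R / (2 * π * ((N : ℝ) + 1) ^ 2)) ^ (j + 1)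

lemma summable_gMajorant {N : ℕ} {R : ℝ} (hR₀ : 0 ≤ R) (hR : R < 2 * π * ((N : ℝ) + 1) ^ 2) :
    Summable (gMajorant N R) :=
  (summable_nat_add_iff 1).mpr <| (summable_geometric_of_lt_one (by positivity)
    ((div_lt_one (by positivity)).mpr hR)).mul_left _

lemma norm_gCoeff_mul_le_gMajorant {N j : ℕ} {R : ℝ} {z : ℂ} (hz : ‖z‖ ≤ R) :
    ‖gCoeff j z‖ * (π ^ 2 / 6 * ((N : ℝ) + 1) ^ (2 - (gExponent j z).re)) ≤ gMajorant N R j := by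
  rw [gMajorant]
  set a : ℝ := (N : ℝ) + 1
  have ha : 1 ≤ a := by simp [a]
  have hexp : a ^ (2 - (gExponent j z).re) ≤ a ^ (R + 3 / 2) / (a ^ 2) ^ (j + 1) := by
    rw [← pow_mul, ← Real.rpow_natCast, ← Real.rpow_sub (by positivity)]
    refine Real.rpow_le_rpow_of_exponent_le ha ?_
    rw [gExponent_re]
    push_cast
    linarith [(abs_le.mp ((abs_im_le_norm z).trans hz)).2]
  have hcoeff : ‖gCoeff j z‖ ≤ (R / (2 * π)) ^ (j + 1) := by
    rw [norm_gCoeff]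
    gcongr
  calc ‖gCoeff j z‖ * (π ^ 2 / 6 * a ^ (2 - (gExponent j z).re))
      ≤ (R / (2 * π)) ^ (j + 1) * (π ^ 2 / 6 * (a ^ (R + 3 / 2) / (a ^ 2) ^ (j + 1))) := by
        gcongr
        exact (norm_nonneg _).trans hcoeff
    _ = π ^ 2 / 6 * a ^ (R + 3 / 2) * (R / (2 * π * a ^ 2)) ^ (j + 1) := by
        rw [div_pow, div_pow, mul_pow, mul_pow]
        field_simp
        ring

lemma two_le_gExponent_re {j : ℕ} {z : ℂ} (hz : ‖z‖ ≤ 2 * j) : 2 ≤ (gExponent j z).re := by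
  rw [gExponent_re]
  linarith [(abs_le.mp ((abs_im_le_norm z).trans hz)).2]

lemma norm_gCoeff_mul_zetaTail_le {N j : ℕ} {R : ℝ} {z : ℂ} (hz : ‖z‖ ≤ R) (hj : R ≤ 2 * j) :
    ‖gCoeff j z * zetaTail N (gExponent j z)‖ ≤ gMajorant N R j := by
  rw [norm_mul]
  exact (mul_le_mul_of_nonneg_left (norm_zetaTail_le N (two_le_gExponent_re (hz.trans hj)))
    (norm_nonneg _)).trans (norm_gCoeff_mul_le_gMajorant hz)

lemma summable_gCoeff_mul_zetaTail {N : ℕ} {z : ℂ} (hz : ‖z‖ < 2 * π * ((N : ℝ) + 1) ^ 2) :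
    Summable fun j => gCoeff j z * zetaTail N (gExponent j z) := by
  refine (summable_gMajorant (norm_nonneg z) hz).of_norm_bounded_eventually ?_
  rw [Nat.cofinite_eq_atTop]
  filter_upwards [eventually_ge_atTop ⌈‖z‖⌉₊] with j hj
  refine norm_gCoeff_mul_zetaTail_le le_rfl ?_
  have : ‖z‖ ≤ j := (Nat.le_ceil _).trans (by exact_mod_cast hj)
  linarith [j.cast_nonneg (α := ℝ)]

lemma lt_two_pi_mul_sq {x : ℝ} {N : ℕ} (h : x ≤ N) : x < 2 * π * ((N : ℝ) + 1) ^ 2 := by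
  nlinarith [pi_gt_three, N.cast_nonneg (α := ℝ)]

lemma gCont_succ {N : ℕ} {z : ℂ} (hz : ‖z‖ < 2 * π * ((N : ℝ) + 1) ^ 2) :
    gCont (N + 1) z = gCont N z := by
  have hexp := hasSum_gCoeff_mul_cpow hz
  simp only [gCont, Finset.sum_range_succ, zetaTail_succ, mul_sub]
  rw [(summable_gCoeff_mul_zetaTail hz).tsum_sub hexp.summable, hexp.tsum_eq]
  ring

lemma gCont_eq_of_le {N M : ℕ} (hNM : N ≤ M) {z : ℂ} (hz : ‖z‖ < 2 * π * ((N : ℝ) + 1) ^ 2) :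
    gCont M z = gCont N z := by
  induction M, hNM using Nat.le_induction with
  | base => rfl
  | succ M hNM ih =>
    rw [← ih, gCont_succ (hz.trans_le ?_)]
    gcongr

lemma gGlobal_eventuallyEq (z₀ : ℂ) : gGlobal =ᶠ[𝓝 z₀] gCont (⌈‖z₀‖⌉₊ + 1) := by
  filter_upwards [Metric.ball_mem_nhds z₀ one_pos] with z hz
  have hnorm : ‖z‖ ≤ ‖z₀‖ + 1 := by
    linarith [norm_le_norm_add_norm_sub' z z₀, mem_ball_iff_norm.mp hz]
  have hceil : ⌈‖z‖⌉₊ ≤ ⌈‖z₀‖⌉₊ + 1 := by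
    rw [Nat.ceil_le]
    push_cast
    linarith [Nat.le_ceil ‖z₀‖]
  exact (gCont_eq_of_le hceil (lt_two_pi_mul_sq (Nat.le_ceil _))).symm

lemma analyticAt_gTerm (m : ℕ) {z : ℂ} (hz : 2 * π * ((m : ℂ) + 1) ^ 2 + z ≠ 0) :
    AnalyticAt ℂ (gTerm m) z :=
  (by fun_prop (disch := exact nat_add_one_mem_slitPlane m) :
    AnalyticAt ℂ (fun z : ℂ => ((m : ℂ) + 1) ^ (-(1 / 2 : ℂ) - I * z)) z).mul
      (analyticAt_id.div (by fun_prop) hz)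

lemma meromorphicAt_gTerm (m : ℕ) (z : ℂ) : MeromorphicAt (gTerm m) z :=
  (by fun_prop (disch := exact nat_add_one_mem_slitPlane m) :
    AnalyticAt ℂ (fun z : ℂ => ((m : ℂ) + 1) ^ (-(1 / 2 : ℂ) - I * z)) z).meromorphicAt.mul
      ((MeromorphicAt.id z).div (by fun_prop : AnalyticAt ℂ _ z).meromorphicAt)

lemma analyticAt_gCoeff_mul_zetaTail (N : ℕ) {j : ℕ} {z : ℂ} (h : gExponent j z ≠ 1) :
    AnalyticAt ℂ (fun z => gCoeff j z * zetaTail N (gExponent j z)) z :=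
  (by unfold gCoeff; fun_prop : AnalyticAt ℂ (gCoeff j) z).mul
    ((analyticAt_zetaTail N h).comp (by unfold gExponent; fun_prop))

lemma meromorphicAt_gCoeff_mul_zetaTail (N j : ℕ) (z : ℂ) :
    MeromorphicAt (fun z => gCoeff j z * zetaTail N (gExponent j z)) z :=
  (by unfold gCoeff; fun_prop : AnalyticAt ℂ (gCoeff j) z).meromorphicAt.mul
    ((meromorphicAt_zetaTail N _).comp_analyticAt (by unfold gExponent; fun_prop))

lemma exists_analyticAt_gCont_eventuallyEq {N : ℕ} {z₀ : ℂ}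
    (hz₀ : ‖z₀‖ < 2 * π * ((N : ℝ) + 1) ^ 2) :
    ∃ J : ℕ, ∃ h : ℂ → ℂ, AnalyticAt ℂ h z₀ ∧ gCont N =ᶠ[𝓝 z₀] fun z =>
      ∑ m ∈ Finset.range N, gTerm m z +
        ∑ j ∈ Finset.range J, gCoeff j z * zetaTail N (gExponent j z) + h z := by
  obtain ⟨R, hz₀R, hR⟩ := exists_between hz₀
  have hR₀ : 0 ≤ R := (norm_nonneg z₀).trans hz₀R.le
  set J := ⌈R⌉₊
  have hJ (j : ℕ) : R ≤ 2 * ((j + J : ℕ) : ℝ) := by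
    have := Nat.le_ceil R
    push_cast
    linarith [j.cast_nonneg (α := ℝ)]
  have hball : Metric.ball (0 : ℂ) R ∈ 𝓝 z₀ := Metric.isOpen_ball.mem_nhds (by simpa using hz₀R)
  refine ⟨J, fun z => ∑' j, gCoeff (j + J) z * zetaTail N (gExponent (j + J) z), ?_, ?_⟩
  · refine DifferentiableOn.analyticAt ?_ hball
    refine differentiableOn_tsum_of_summable_norm ((summable_nat_add_iff J).mpr
      (summable_gMajorant hR₀ hR)) (fun j z hz => ?_) Metric.isOpen_ball (fun j z hz => ?_)
    · have hre := two_le_gExponent_re ((mem_ball_zero_iff.mp hz).le.trans (hJ j))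
      exact (analyticAt_gCoeff_mul_zetaTail N fun h1 => by norm_num [h1] at hre)
        |>.differentiableAt.differentiableWithinAt
    · exact norm_gCoeff_mul_zetaTail_le (by simpa using (mem_ball_zero_iff.mp hz).le) (hJ j)
  · filter_upwards [hball] with z hz
    have hsum := summable_gCoeff_mul_zetaTail ((mem_ball_zero_iff.mp hz).trans hR)
    rw [gCont, ← hsum.sum_add_tsum_nat_add J, add_assoc]

lemma meromorphicAt_gCont {N : ℕ} {z₀ : ℂ} (hz₀ : ‖z₀‖ < 2 * π * ((N : ℝ) + 1) ^ 2) :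
    MeromorphicAt (gCont N) z₀ := by
  obtain ⟨J, h, hh, hEq⟩ := exists_analyticAt_gCont_eventuallyEq hz₀
  refine MeromorphicAt.congr ?_ (hEq.symm.filter_mono nhdsWithin_le_nhds)
  exact ((MeromorphicAt.fun_sum fun m _ => meromorphicAt_gTerm m z₀).add
    (MeromorphicAt.fun_sum fun j _ => meromorphicAt_gCoeff_mul_zetaTail N j z₀)).add
      hh.meromorphicAt

lemma analyticAt_gCont {N : ℕ} {z₀ : ℂ} (hz₀ : ‖z₀‖ < 2 * π * ((N : ℝ) + 1) ^ 2)
    (hden : ∀ m : ℕ, 2 * π * ((m : ℂ) + 1) ^ 2 + z₀ ≠ 0) (hexp : ∀ j, gExponent j z₀ ≠ 1) :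
    AnalyticAt ℂ (gCont N) z₀ := by
  obtain ⟨J, h, hh, hEq⟩ := exists_analyticAt_gCont_eventuallyEq hz₀
  refine AnalyticAt.congr ?_ hEq.symm
  exact ((Finset.analyticAt_fun_sum _ fun m _ => analyticAt_gTerm m (hden m)).add
    (Finset.analyticAt_fun_sum _ fun j _ => analyticAt_gCoeff_mul_zetaTail N (hexp j))).add hh

lemma two_pi_mul_sq_add_ne_zero_of_notMem {z : ℂ} (hz : z ∉ GPoles) (m : ℕ) :
    2 * π * ((m : ℂ) + 1) ^ 2 + z ≠ 0 := fun h =>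
  hz <| Or.inr ⟨m + 1, m.succ_pos, by push_cast; linear_combination h⟩

lemma gExponent_ne_one_of_notMem {z : ℂ} (hz : z ∉ GPoles) (j : ℕ) : gExponent j z ≠ 1 :=
  fun h => hz <| Or.inl ⟨j + 1, j.succ_pos, by
    rw [gExponent] at h
    push_cast
    linear_combination (-I) * h + z * I_sq⟩

lemma meromorphicAt_gGlobal (z : ℂ) : MeromorphicAt gGlobal z :=
  (meromorphicAt_gCont (lt_two_pi_mul_sq (by push_cast; linarith [Nat.le_ceil ‖z‖]))).congr
    ((gGlobal_eventuallyEq z).symm.filter_mono nhdsWithin_le_nhds)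

lemma analyticAt_gGlobal {z : ℂ} (hz : z ∉ GPoles) : AnalyticAt ℂ gGlobal z :=
  (analyticAt_gCont (lt_two_pi_mul_sq (by push_cast; linarith [Nat.le_ceil ‖z‖]))
    (two_pi_mul_sq_add_ne_zero_of_notMem hz) (gExponent_ne_one_of_notMem hz)).congr
      (gGlobal_eventuallyEq z).symm

lemma two_le_gExponent_ofReal_re (j : ℕ) (t : ℝ) : 2 ≤ (gExponent j t).re := by
  rw [gExponent_re, ofReal_im]
  linarith [j.cast_nonneg (α := ℝ)]

lemma summable_gCoeff_mul_cpow_ofReal {N : ℕ} {t : ℝ}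
    (ht : ‖(t : ℂ)‖ < 2 * π * ((N : ℝ) + 1) ^ 2) :
    Summable fun p : ℕ × ℕ => gCoeff p.1 t * (((p.2 + N : ℕ) : ℂ) + 1) ^ (-gExponent p.1 t) := by
  have hrow (j : ℕ) : Summable fun n : ℕ =>
      ‖gCoeff j t‖ * ‖(((n + N : ℕ) : ℂ) + 1) ^ (-gExponent j t)‖ := by
    have hre := two_le_gExponent_ofReal_re j t
    exact ((summable_nat_add_iff (f := fun n : ℕ => ‖((n : ℂ) + 1) ^ (-gExponent j t)‖) N).mpr
      (summable_norm_nat_add_one_cpow_neg (by linarith))).mul_left _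
  simp only [← norm_mul] at hrow
  refine Summable.of_norm ((summable_prod_of_nonneg fun _ => norm_nonneg _).mpr ⟨hrow, ?_⟩)
  refine (summable_gMajorant (norm_nonneg _) ht).of_nonneg_of_le
    (fun j => tsum_nonneg fun _ => norm_nonneg _) fun j => ?_
  calc ∑' n : ℕ, ‖gCoeff j t * (((n + N : ℕ) : ℂ) + 1) ^ (-gExponent j t)‖
      = ‖gCoeff j t‖ * ∑' n : ℕ, ‖(((n + N : ℕ) : ℂ) + 1) ^ (-gExponent j t)‖ := by
        simp only [norm_mul, tsum_mul_left]
    _ ≤ ‖gCoeff j t‖ * (π ^ 2 / 6 * ((N : ℝ) + 1) ^ (2 - (gExponent j t).re)) := by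
        gcongr
        exact tsum_norm_cpow_neg_nat_add_le N (two_le_gExponent_ofReal_re j t)
    _ ≤ gMajorant N ‖(t : ℂ)‖ j := norm_gCoeff_mul_le_gMajorant le_rfl

lemma gCont_ofReal {N : ℕ} {t : ℝ} (ht : ‖(t : ℂ)‖ < 2 * π * ((N : ℝ) + 1) ^ 2) :
    gCont N t = ∑' m, gTerm m t := by
  set b : ℕ → ℕ → ℂ := fun j n => gCoeff j t * (((n + N : ℕ) : ℂ) + 1) ^ (-gExponent j t)
  have hb : Summable (Function.uncurry b) := summable_gCoeff_mul_cpow_ofReal ht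
  have hrows (j : ℕ) : ∑' n, b j n = gCoeff j t * zetaTail N (gExponent j t) := by
    rw [zetaTail_eq_tsum N (by linarith [two_le_gExponent_ofReal_re j t]), ← tsum_mul_left]
  have hcols (n : ℕ) : HasSum (fun j => b j n) (gTerm (n + N) t) := by
    have hnN : 2 * π * ((N : ℝ) + 1) ^ 2 ≤ 2 * π * (((n + N : ℕ) : ℝ) + 1) ^ 2 := by
      gcongr
      exact_mod_cast N.le_add_left n
    exact hasSum_gCoeff_mul_cpow (m := n + N) (ht.trans_le hnN)
  have htail : ∑' j, gCoeff j t * zetaTail N (gExponent j t) = ∑' n, gTerm (n + N) t := by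
    simp only [← hrows, ← (hcols _).tsum_eq]
    exact hb.tsum_comm.symm
  have hsum : Summable fun n => gTerm (n + N) t :=
    hb.prod_symm.prod.congr fun n => (hcols n).tsum_eq
  rw [gCont, htail]
  exact ((summable_nat_add_iff (f := fun m => gTerm m t) N).mp hsum).sum_add_tsum_nat_add N

/-- The function `G(t) = ∑_{n≥1} n^{-1/2-it} t/(2πn²+t)` extends to a meromorphic
function on `ℂ` whose poles are contained in
`{(2k-1/2)i : k ≥ 1} ∪ {-2πn² : n ≥ 1}`. -/
theorem G_meromorphic_continuation :
    ∃ G : ℂ → ℂ,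
      (∀ z : ℂ, MeromorphicAt G z) ∧
      (∀ z : ℂ, z ∉ GPoles → AnalyticAt ℂ G z) ∧
      (∀ t : ℝ, (∀ n : ℕ, 2 * π * ((n : ℝ) + 1) ^ 2 + t ≠ 0) →
        G t = ∑' n : ℕ, ((n : ℂ) + 1) ^ (-(1 / 2 : ℂ) - I * t) *
          ((t : ℂ) / (2 * π * ((n : ℂ) + 1) ^ 2 + t))) :=
  ⟨gGlobal, meromorphicAt_gGlobal, fun _ => analyticAt_gGlobal,
    fun _ _ => gCont_ofReal (lt_two_pi_mul_sq (Nat.le_ceil _))⟩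
end
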